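/- arXiv:1910.01006 — 4 statements merged into one kernel-verified Lean document; each statement's English description precedes it below -/
import Mathlib

section
/- Let T₁ be a compact self-adjoint operator and T₂ a self-adjoint trace-class operator on a separable Hilbert space. Then for every s > 0, (1/π) ∫_ℝ n_±(s; T₁ + t T₂) dt/(1+t²) ≤ n_±(s/2; T₁) + (2/(πs)) ‖T₂‖₁. -/
open scoped ENNReal
open MeasureTheory

/-- Counting of eigenvalues (with multiplicity) of `T` lying in the real set `S`. -/
noncomputable def eigCount {H : Type*} [NormedAddCommGroup H] [InnerProductSpace ℂ H]
    (T : H →L[ℂ] H) (S : Set ℝ) : ℝ≥0∞ :=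
  ∑' μ : S, (Module.finrank ℂ (Module.End.eigenspace (T : H →ₗ[ℂ] H) (μ : ℂ)) : ℝ≥0∞)

/-- The trace norm `‖T‖₁ = ∑ |μ|` over eigenvalues with multiplicity (for compact
self-adjoint `T`). -/
noncomputable def traceNormE {H : Type*} [NormedAddCommGroup H] [InnerProductSpace ℂ H]
    (T : H →L[ℂ] H) : ℝ≥0∞ :=
  ∑' μ : ℝ, (Module.finrank ℂ (Module.End.eigenspace (T : H →ₗ[ℂ] H) (μ : ℂ)) : ℝ≥0∞)
    * ENNReal.ofReal |μ|

/-!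
Weyl's inequality `n₊(a + b; A + B) ≤ n₊(a; A) + n₊(b; B)`, with `a = b = s/2`, `A = T₁` and
`B = t T₂`, bounds the integrand by `n₊(s/2; T₁)` plus the number of eigenvalues `ν` of `T₂`,
counted with multiplicity, with `t ν > s/2`. The first term integrates against the Cauchy weight
to `π n₊(s/2; T₁)`. After exchanging sum and integral, each eigenvalue `ν` of `T₂` contributes the
Cauchy measure of the half-line `{t : t ν > s/2}`, which is `arctan (2|ν|/s) ≤ 2|ν|/s`; summing
gives `(2/s) ‖T₂‖₁`.

Weyl's inequality is a min-max argument. On the span of the eigenvectors of `A + B` with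
eigenvalues above `a + b`, the form `⟪(A + B) x, x⟫` exceeds `(a + b) ‖x‖²`. By the spectral
theorem for compact self-adjoint operators, `⟪A x, x⟫ ≤ a ‖x‖²` on the orthogonal complement of the
eigenvectors of `A` above `a`, and likewise for `B`. So that span meets the orthogonal complement
of the sum of these two finite-dimensional spaces only in `0`, and its dimension is at most
`n₊(a; A) + n₊(b; B)`.
-/

open scoped InnerProductSpace
open Module End Set

section Eigenspaces

variable {K M : Type*} [Field K] [AddCommGroup M] [Module K M]

lemma Module.End.eigenspace_smul_mul (T : End K M) {a : K} (ha : a ≠ 0) (μ : K) :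
    eigenspace (a • T) (a * μ) = eigenspace T μ := by
  ext x
  rw [mem_eigenspace_iff, mem_eigenspace_iff, LinearMap.smul_apply, mul_smul]
  exact (smul_right_injective M ha).eq_iff

lemma Module.End.eigenspace_zero_of_ne_zero {μ : K} (hμ : μ ≠ 0) :
    eigenspace (0 : End K M) μ = ⊥ := by
  ext x
  rw [mem_eigenspace_iff, LinearMap.zero_apply, eq_comm, smul_eq_zero, Submodule.mem_bot]
  exact or_iff_right hμ

end Eigenspaces

section EigCount

variable {H : Type*} [NormedAddCommGroup H] [InnerProductSpace ℂ H]

lemma eigCount_eq_tsum_indicator (T : H →L[ℂ] H) (S : Set ℝ) :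
    eigCount T S = ∑' μ : ℝ,
      S.indicator (fun μ ↦ (finrank ℂ (eigenspace (T : End ℂ H) (μ : ℂ)) : ℝ≥0∞)) μ :=
  tsum_subtype S (fun μ : ℝ ↦ (finrank ℂ (eigenspace (T : End ℂ H) (μ : ℂ)) : ℝ≥0∞))

lemma eigCount_ofReal_smul (T : H →L[ℂ] H) {S : Set ℝ} (hS : 0 ∉ S) (a : ℝ) :
    eigCount ((a : ℂ) • T) S = eigCount T ((a * ·) ⁻¹' S) := by
  rw [eigCount_eq_tsum_indicator, eigCount_eq_tsum_indicator]
  rcases eq_or_ne a 0 with rfl | ha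
  · have hempty : ((0 * ·) ⁻¹' S : Set ℝ) = ∅ := by
      ext ν
      simpa using hS
    rw [hempty, indicator_empty, tsum_zero, Complex.ofReal_zero, zero_smul]
    refine ENNReal.tsum_eq_zero.2 fun μ ↦ indicator_apply_eq_zero.2 fun hμS ↦ ?_
    have hμ : (μ : ℂ) ≠ 0 := Complex.ofReal_ne_zero.2 (ne_of_mem_of_not_mem hμS hS)
    rw [ContinuousLinearMap.toLinearMap_zero, eigenspace_zero_of_ne_zero hμ, finrank_bot,
      Nat.cast_zero]
  · rw [← (Equiv.mulLeft₀ a ha).tsum_eq]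
    refine tsum_congr fun ν ↦ ?_
    rw [← indicator_comp_right]
    congr 1
    ext ν
    rw [Function.comp_apply, Equiv.mulLeft₀_apply, ContinuousLinearMap.toLinearMap_smul,
      Complex.ofReal_mul, eigenspace_smul_mul _ (Complex.ofReal_ne_zero.2 ha)]

lemma traceNormE_neg (T : H →L[ℂ] H) : traceNormE (-T) = traceNormE T := by
  rw [traceNormE, traceNormE, ← (Equiv.neg ℝ).tsum_eq]
  refine tsum_congr fun μ ↦ ?_
  have h : eigenspace (-(T : End ℂ H)) (-(μ : ℂ)) = eigenspace (T : End ℂ H) μ := by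
    simpa using eigenspace_smul_mul (T : End ℂ H) (neg_ne_zero.2 one_ne_zero) (μ : ℂ)
  rw [Equiv.neg_apply, Complex.ofReal_neg, ContinuousLinearMap.toLinearMap_neg, h, abs_neg]

end EigCount

section SymmetricEigenspaces

variable {H : Type*} [NormedAddCommGroup H] [InnerProductSpace ℂ H]

lemma LinearMap.IsSymmetric.re_inner_map_sum_eigenvectors {T : End ℂ H} (hT : T.IsSymmetric)
    {ι : Type*} {e : ι → ℂ} (he : Function.Injective e) (s : Finset ι)
    (x : ∀ i, eigenspace T (e i)) :
    (⟪T (∑ i ∈ s, (x i : H)), ∑ i ∈ s, (x i : H)⟫_ℂ).re = ∑ i ∈ s, (e i).re * ‖x i‖ ^ 2 := by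
  have hTx : T (∑ i ∈ s, (x i : H)) = ∑ i ∈ s, ((e i • x i : eigenspace T (e i)) : H) := by
    rw [map_sum]
    exact Finset.sum_congr rfl fun i _ ↦ mem_eigenspace_iff.1 (x i).2
  have h := (hT.orthogonalFamily_eigenspaces.comp he).inner_sum (fun i ↦ e i • x i) x s
  simp only [Submodule.coe_subtypeₗᵢ, Submodule.coe_subtype] at h
  rw [hTx, h, Complex.re_sum]
  refine Finset.sum_congr rfl fun i _ ↦ ?_
  rw [inner_smul_left, inner_self_eq_norm_sq_to_K]
  simp [← Complex.ofReal_pow]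

lemma LinearMap.IsSymmetric.lt_re_inner_of_mem_biSup_eigenspace {T : End ℂ H}
    (hT : T.IsSymmetric) {c : ℝ} (F : Finset (Ioi c)) {x : H}
    (hx : x ∈ ⨆ μ ∈ F, eigenspace T ((μ : ℝ) : ℂ)) (hx0 : x ≠ 0) :
    c * ‖x‖ ^ 2 < (⟪T x, x⟫_ℂ).re := by
  have he : Function.Injective fun μ : Ioi c ↦ ((μ : ℝ) : ℂ) :=
    Complex.ofReal_injective.comp Subtype.val_injective
  obtain ⟨y, rfl⟩ := (Submodule.mem_iSup_finset_iff_exists_sum _ x).1 hx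
  have hnorm := (hT.orthogonalFamily_eigenspaces.comp he).norm_sum y F
  simp only [Submodule.coe_subtypeₗᵢ, Submodule.coe_subtype] at hnorm
  rw [hT.re_inner_map_sum_eigenvectors he, hnorm, Finset.mul_sum]
  obtain ⟨μ₀, hμ₀, hy₀⟩ := Finset.exists_ne_zero_of_sum_ne_zero hx0
  refine Finset.sum_lt_sum (fun μ _ ↦ ?_) ⟨μ₀, hμ₀, ?_⟩
  · exact mul_le_mul_of_nonneg_right (by simpa using μ.2.le) (sq_nonneg _)
  · rw [Complex.ofReal_re]
    exact mul_lt_mul_of_pos_right μ₀.2 (pow_pos (norm_pos_iff.2 (by simpa using hy₀)) 2)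

lemma LinearMap.IsSymmetric.iSupIndep_eigenspace_ofReal {T : End ℂ H} (hT : T.IsSymmetric)
    (S : Set ℝ) : iSupIndep fun μ : S ↦ eigenspace T ((μ : ℝ) : ℂ) :=
  (hT.orthogonalFamily_eigenspaces.comp
    (Complex.ofReal_injective.comp Subtype.val_injective)).independent

end SymmetricEigenspaces

section Spectral

variable {H : Type*} [NormedAddCommGroup H] [InnerProductSpace ℂ H]

def spectralSubspace (T : H →L[ℂ] H) (S : Set ℝ) : Submodule ℂ H :=
  ⨆ μ : S, eigenspace (T : End ℂ H) (μ : ℂ)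

lemma LinearMap.IsSymmetric.mapsTo_orthogonal_spectralSubspace {T : H →L[ℂ] H}
    (hT : (T : End ℂ H).IsSymmetric) (S : Set ℝ) :
    ∀ x ∈ (spectralSubspace T S)ᗮ, T x ∈ (spectralSubspace T S)ᗮ := by
  rw [spectralSubspace, ← Submodule.iInf_orthogonal]
  exact (T : End ℂ H).iInf_invariant fun μ ↦ hT.invariant_orthogonalComplement_eigenspace _

variable [CompleteSpace H]

theorem IsCompactOperator.re_inner_le_of_forall_hasEigenvalue {T : H →L[ℂ] H}
    (hT : IsCompactOperator T) (hsym : (T : End ℂ H).IsSymmetric) {c : ℝ}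
    (hc : ∀ μ, HasEigenvalue (T : End ℂ H) μ → μ.re ≤ c) (x : H) :
    (⟪T x, x⟫_ℂ).re ≤ c * ‖x‖ ^ 2 := by
  set E := ⨆ μ, eigenspace (T : End ℂ H) μ
  have hdense : E.topologicalClosure = ⊤ := Submodule.topologicalClosure_eq_top_iff.2
    (ContinuousLinearMap.orthogonalComplement_iSup_eigenspaces_eq_bot hT hsym)
  have hclosed : IsClosed {x : H | (⟪T x, x⟫_ℂ).re ≤ c * ‖x‖ ^ 2} :=
    isClosed_le (by fun_prop) (by fun_prop)
  have hE : (E : Set H) ⊆ {x : H | (⟪T x, x⟫_ℂ).re ≤ c * ‖x‖ ^ 2} := by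
    intro x hx
    obtain ⟨s, hs⟩ := Submodule.mem_iSup_iff_exists_finset.1 hx
    obtain ⟨y, rfl⟩ := (Submodule.mem_iSup_finset_iff_exists_sum _ x).1 hs
    have hnorm := hsym.orthogonalFamily_eigenspaces.norm_sum y s
    simp only [Submodule.coe_subtypeₗᵢ, Submodule.coe_subtype] at hnorm
    have hq := hsym.re_inner_map_sum_eigenvectors (e := id) Function.injective_id s y
    rw [ContinuousLinearMap.coe_coe] at hq
    rw [mem_ofPred, hq, hnorm, Finset.mul_sum]
    refine Finset.sum_le_sum fun μ _ ↦ ?_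
    rcases eq_or_ne (y μ) 0 with hy | hy
    · simp [hy]
    · have hμ : HasEigenvalue (T : End ℂ H) μ :=
        hasEigenvalue_of_hasEigenvector ⟨(y μ).2, by simpa using hy⟩
      exact mul_le_mul_of_nonneg_right (hc μ hμ) (sq_nonneg _)
  have hx : x ∈ closure (E : Set H) := by
    rw [← Submodule.topologicalClosure_coe, hdense]
    trivial
  exact hclosed.closure_subset_iff.2 hE hx

theorem IsCompactOperator.re_inner_le_of_mem_orthogonal_spectralSubspace {T : H →L[ℂ] H}
    (hT : IsCompactOperator T) (hsym : (T : End ℂ H).IsSymmetric) (c : ℝ) {x : H}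
    (hx : x ∈ (spectralSubspace T (Ioi c))ᗮ) :
    (⟪T x, x⟫_ℂ).re ≤ c * ‖x‖ ^ 2 := by
  set G := (spectralSubspace T (Ioi c))ᗮ
  have hG := hsym.mapsTo_orthogonal_spectralSubspace (Ioi c)
  let TG : G →L[ℂ] G := T.restrict hG
  have hTG : IsCompactOperator TG := hT.restrict' hG
  have hTGsym : (TG : End ℂ G).IsSymmetric := hsym.restrict_invariant hG
  refine hTG.re_inner_le_of_forall_hasEigenvalue hTGsym (fun μ hμ ↦ ?_) ⟨x, hx⟩
  -- an eigenvector of `TG` with eigenvalue above `c` lies in `spectralSubspace T (Ioi c) ⊓ G = ⊥`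
  obtain ⟨y, hy, hy0⟩ := hμ.exists_hasEigenvector
  by_contra! hcμ
  have hμ_re : ((μ.re : ℝ) : ℂ) = μ := Complex.conj_eq_iff_re.1 (hTGsym.conj_eigenvalue_eq_self hμ)
  have hTy : T y = ((μ.re : ℝ) : ℂ) • (y : H) := by
    rw [hμ_re]
    exact congrArg Subtype.val (mem_eigenspace_iff.1 hy)
  have hmem : (y : H) ∈ spectralSubspace T (Ioi c) :=
    le_iSup (fun μ : Ioi c ↦ eigenspace (T : End ℂ H) (μ : ℂ)) ⟨μ.re, hcμ⟩
      (mem_eigenspace_iff.2 hTy)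
  exact hy0 (Subtype.ext (inner_self_eq_zero.1 (y.2 _ hmem)))

end Spectral

section Dimension

variable {K V ι : Type*} [DivisionRing K] [AddCommGroup V] [Module K V]

lemma Submodule.finiteDimensional_biSup (p : ι → Submodule K V) [∀ i, FiniteDimensional K (p i)]
    (s : Finset ι) : FiniteDimensional K ↥(⨆ i ∈ s, p i) :=
  iSup_subtype'' (s : Set ι) p ▸ Submodule.finiteDimensional_iSup _

lemma iSupIndep.finrank_biSup {p : ι → Submodule K V} (hp : iSupIndep p)
    [∀ i, FiniteDimensional K (p i)] (s : Finset ι) :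
    finrank K ↥(⨆ i ∈ s, p i) = ∑ i ∈ s, finrank K (p i) := by
  classical
  induction s using Finset.induction_on with
  | empty =>
    rw [show (⨆ i ∈ (∅ : Finset ι), p i) = ⊥ by simp, finrank_bot, Finset.sum_empty]
  | insert a s ha ih =>
    have := Submodule.finiteDimensional_biSup p s
    have hdisj : p a ⊓ ⨆ i ∈ s, p i = ⊥ :=
      (hp.disjoint_biSup (y := (s : Set ι)) (Finset.mem_coe.not.2 ha)).eq_bot
    have hsum := Submodule.finrank_sup_add_finrank_inf_eq (p a) (⨆ i ∈ s, p i)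
    rw [hdisj, finrank_bot, add_zero] at hsum
    rw [Finset.iSup_insert, Finset.sum_insert ha, ← ih, hsum]

end Dimension

section EigenspaceDimension

variable {H : Type*} [NormedAddCommGroup H] [InnerProductSpace ℂ H] [CompleteSpace H]
  {T : H →L[ℂ] H} {S : Set ℝ}

lemma IsCompactOperator.finiteDimensional_eigenspace_of_notMem (hT : IsCompactOperator T)
    (hS : 0 ∉ S) (μ : S) : FiniteDimensional ℂ (eigenspace (T : End ℂ H) ((μ : ℝ) : ℂ)) :=
  ContinuousLinearMap.finite_dimensional_eigenspace hT _
    (Complex.ofReal_ne_zero.2 (ne_of_mem_of_not_mem μ.2 hS))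

lemma eigCount_eq_iSup_finrank (hT : IsCompactOperator T) (hsym : (T : End ℂ H).IsSymmetric)
    (hS : 0 ∉ S) :
    eigCount T S = ⨆ F : Finset S,
      (finrank ℂ ↥(⨆ μ ∈ F, eigenspace (T : End ℂ H) ((μ : ℝ) : ℂ)) : ℝ≥0∞) := by
  have := hT.finiteDimensional_eigenspace_of_notMem hS
  rw [eigCount, ENNReal.tsum_eq_iSup_sum]
  congr 1 with F
  rw [(hsym.iSupIndep_eigenspace_ofReal S).finrank_biSup, Nat.cast_sum]

theorem finiteDimensional_spectralSubspace_and_finrank_eq (hT : IsCompactOperator T)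
    (hsym : (T : End ℂ H).IsSymmetric) (hS : 0 ∉ S) (hfin : eigCount T S ≠ ⊤) :
    FiniteDimensional ℂ (spectralSubspace T S) ∧
      (finrank ℂ (spectralSubspace T S) : ℝ≥0∞) = eigCount T S := by
  set p : S → Submodule ℂ H := fun μ ↦ eigenspace (T : End ℂ H) ((μ : ℝ) : ℂ)
  have := hT.finiteDimensional_eigenspace_of_notMem hS
  set F := (ENNReal.finite_const_le_of_tsum_ne_top hfin one_ne_zero).toFinset
  have hF : ∀ μ ∉ F, p μ = ⊥ := fun μ hμ ↦ by
    simpa [F, Submodule.finrank_eq_zero] using hμ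
  have hsub : spectralSubspace T S = ⨆ μ ∈ F, p μ := by
    refine le_antisymm (iSup_le fun μ ↦ ?_) (iSup₂_le fun μ _ ↦ le_iSup p μ)
    by_cases hμ : μ ∈ F
    · exact le_biSup p hμ
    · exact (hF μ hμ).trans_le bot_le
  rw [hsub]
  refine ⟨Submodule.finiteDimensional_biSup p F, ?_⟩
  rw [(hsym.iSupIndep_eigenspace_ofReal S).finrank_biSup, Nat.cast_sum, eigCount,
    tsum_eq_sum fun μ hμ ↦ by simp [p, hF μ hμ]]

end EigenspaceDimension

lemma Submodule.finrank_le_of_inf_orthogonal_eq_bot {𝕜 E : Type*} [RCLike 𝕜]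
    [NormedAddCommGroup E] [InnerProductSpace 𝕜 E] {V W : Submodule 𝕜 E} [FiniteDimensional 𝕜 V]
    (h : W ⊓ Vᗮ = ⊥) : finrank 𝕜 W ≤ finrank 𝕜 V := by
  refine LinearMap.finrank_le_finrank_of_injective
    (f := (V.orthogonalProjectionOnto : E →ₗ[𝕜] V) ∘ₗ W.subtype) ?_
  rw [← LinearMap.ker_eq_bot, Submodule.eq_bot_iff]
  intro w hw
  have hw' : (w : E) ∈ W ⊓ Vᗮ := ⟨w.2, Submodule.orthogonalProjectionOnto_eq_zero_iff.1 hw⟩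
  rw [h, Submodule.mem_bot] at hw'
  exact Subtype.ext hw'

section Weyl

variable {H : Type*} [NormedAddCommGroup H] [InnerProductSpace ℂ H] [CompleteSpace H]

theorem eigCount_add_Ioi_le {A B : H →L[ℂ] H} (hA : IsCompactOperator A)
    (hAsym : (A : End ℂ H).IsSymmetric) (hB : IsCompactOperator B)
    (hBsym : (B : End ℂ H).IsSymmetric) {a b : ℝ} (ha : 0 ≤ a) (hb : 0 ≤ b) :
    eigCount (A + B) (Ioi (a + b)) ≤ eigCount A (Ioi a) + eigCount B (Ioi b) := by
  by_cases hAfin : eigCount A (Ioi a) = ⊤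
  · simp [hAfin]
  by_cases hBfin : eigCount B (Ioi b) = ⊤
  · simp [hBfin]
  obtain ⟨_, hAr⟩ :=
    finiteDimensional_spectralSubspace_and_finrank_eq hA hAsym (notMem_Ioi.2 ha) hAfin
  obtain ⟨_, hBr⟩ :=
    finiteDimensional_spectralSubspace_and_finrank_eq hB hBsym (notMem_Ioi.2 hb) hBfin
  set KA := spectralSubspace A (Ioi a)
  set KB := spectralSubspace B (Ioi b)
  have hsym : ((A + B : H →L[ℂ] H) : End ℂ H).IsSymmetric := by
    rw [ContinuousLinearMap.toLinearMap_add]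
    exact hAsym.add hBsym
  rw [eigCount_eq_iSup_finrank (hA.add hB) hsym (notMem_Ioi.2 (add_nonneg ha hb)), ← hAr, ← hBr]
  refine iSup_le fun F ↦ ?_
  have hW : (⨆ μ ∈ F, eigenspace ((A + B : H →L[ℂ] H) : End ℂ H) ((μ : ℝ) : ℂ)) ⊓ (KA ⊔ KB)ᗮ
      = ⊥ := by
    rw [Submodule.eq_bot_iff]
    rintro x ⟨hxW, hx⟩
    rw [← Submodule.inf_orthogonal] at hx
    by_contra hx0
    have hAx := hA.re_inner_le_of_mem_orthogonal_spectralSubspace hAsym a hx.1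
    have hBx := hB.re_inner_le_of_mem_orthogonal_spectralSubspace hBsym b hx.2
    have hABx := hsym.lt_re_inner_of_mem_biSup_eigenspace F hxW hx0
    rw [ContinuousLinearMap.coe_coe, add_apply, inner_add_left, Complex.add_re] at hABx
    linarith
  exact_mod_cast (Submodule.finrank_le_of_inf_orthogonal_eq_bot hW).trans
    (Submodule.finrank_add_le_finrank_add_finrank KA KB)

end Weyl

section CauchyWeight

open Real

lemma Real.arctan_le_self {x : ℝ} (hx : 0 ≤ x) : arctan x ≤ x := by
  simpa using le_tan (arctan_nonneg.2 hx) (arctan_lt_pi_div_two x)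

lemma lintegral_inv_one_add_sq :
    ∫⁻ t : ℝ, ENNReal.ofReal (1 + t ^ 2)⁻¹ = ENNReal.ofReal π := by
  rw [← ofReal_integral_eq_lintegral_ofReal integrable_inv_one_add_sq
    (ae_of_all _ fun t ↦ by positivity), integral_univ_inv_one_add_sq]

lemma setLIntegral_Ioi_inv_one_add_sq_le {a : ℝ} (ha : 0 < a) :
    ∫⁻ t in Ioi a, ENNReal.ofReal (1 + t ^ 2)⁻¹ ≤ ENNReal.ofReal a⁻¹ := by
  rw [← ofReal_integral_eq_lintegral_ofReal integrable_inv_one_add_sq.integrableOn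
      (ae_of_all _ fun t ↦ by positivity), integral_Ioi_inv_one_add_sq, ← arctan_inv_of_pos ha]
  exact ENNReal.ofReal_le_ofReal (arctan_le_self (inv_nonneg.2 ha.le))

lemma setLIntegral_Iio_inv_one_add_sq_le {a : ℝ} (ha : a < 0) :
    ∫⁻ t in Iio a, ENNReal.ofReal (1 + t ^ 2)⁻¹ ≤ ENNReal.ofReal (-a)⁻¹ := by
  rw [setLIntegral_congr Iio_ae_eq_Iic,
    ← ofReal_integral_eq_lintegral_ofReal integrable_inv_one_add_sq.integrableOn
      (ae_of_all _ fun t ↦ by positivity), integral_Iic_inv_one_add_sq,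
    show arctan a + π / 2 = π / 2 - arctan (-a) by rw [arctan_neg]; ring,
    ← arctan_inv_of_pos (neg_pos.2 ha)]
  exact ENNReal.ofReal_le_ofReal (arctan_le_self (inv_nonneg.2 (neg_nonneg.2 ha.le)))

lemma setLIntegral_lt_mul_inv_one_add_sq_le {c : ℝ} (hc : 0 < c) (ν : ℝ) :
    ∫⁻ t in {t | c < t * ν}, ENNReal.ofReal (1 + t ^ 2)⁻¹ ≤ ENNReal.ofReal (|ν| / c) := by
  rcases lt_trichotomy ν 0 with hν | rfl | hν
  · have hset : {t : ℝ | c < t * ν} = Iio (c / ν) := by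
      ext t
      exact (lt_div_iff_of_neg hν).symm
    rw [hset, abs_of_neg hν]
    refine (setLIntegral_Iio_inv_one_add_sq_le (div_neg_of_pos_of_neg hc hν)).trans_eq ?_
    rw [inv_neg, inv_div, neg_div]
  · simp [hc.not_gt]
  · have hset : {t : ℝ | c < t * ν} = Ioi (c / ν) := by
      ext t
      exact (div_lt_iff₀ hν).symm
    rw [hset, abs_of_pos hν]
    exact (setLIntegral_Ioi_inv_one_add_sq_le (div_pos hc hν)).trans_eq (by rw [inv_div])

end CauchyWeight

lemma lintegral_tsum_indicator_mul_inv_one_add_sq_le (m : ℝ → ℝ≥0∞)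
    (hm : ∑' ν, m ν * ENNReal.ofReal |ν| ≠ ⊤) {c : ℝ} (hc : 0 < c) :
    ∫⁻ t, (∑' ν, {ν | c < t * ν}.indicator m ν) * ENNReal.ofReal (1 + t ^ 2)⁻¹
      ≤ ENNReal.ofReal c⁻¹ * ∑' ν, m ν * ENNReal.ofReal |ν| := by
  set w : ℝ → ℝ≥0∞ := fun t ↦ ENNReal.ofReal (1 + t ^ 2)⁻¹
  have hw : Measurable w := ENNReal.measurable_ofReal.comp (by fun_prop)
  set D := Function.support fun ν ↦ m ν * ENNReal.ofReal |ν|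
  have : Countable D := (Summable.countable_support_ennreal hm).to_subtype
  -- only the countably many `ν ∈ D` contribute, which makes the integral and the sum commute
  have hsupp : ∀ t, Function.support (fun ν ↦ {ν | c < t * ν}.indicator m ν * w t) ⊆ D := by
    intro t ν hν
    obtain ⟨hlt, hmν⟩ := indicator_apply_ne_zero.1 (left_ne_zero_of_mul hν)
    have hν0 : ν ≠ 0 := by
      rintro rfl
      exact hc.not_gt (by simpa using hlt)
    exact mul_ne_zero hmν (by simpa using hν0)
  have hterm (ν : ℝ) : ∫⁻ t, {ν | c < t * ν}.indicator m ν * w t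
      ≤ ENNReal.ofReal c⁻¹ * (m ν * ENNReal.ofReal |ν|) := by
    have hind : (fun t ↦ {ν | c < t * ν}.indicator m ν * w t)
        = {t | c < t * ν}.indicator fun t ↦ m ν * w t := by
      ext t
      by_cases h : c < t * ν <;> simp [h]
    rw [hind, lintegral_indicator (measurableSet_lt measurable_const (by fun_prop)),
      lintegral_const_mul _ hw]
    calc m ν * ∫⁻ t in {t | c < t * ν}, w t ≤ m ν * ENNReal.ofReal (|ν| / c) :=
          mul_le_mul_right (setLIntegral_lt_mul_inv_one_add_sq_le hc ν) _
      _ = ENNReal.ofReal c⁻¹ * (m ν * ENNReal.ofReal |ν|) := by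
          rw [div_eq_inv_mul, ENNReal.ofReal_mul (inv_nonneg.2 hc.le)]
          ring
  calc ∫⁻ t, (∑' ν, {ν | c < t * ν}.indicator m ν) * w t
      = ∫⁻ t, ∑' ν : D, {ν | c < t * ν}.indicator m ν * w t := by
        simp_rw [← ENNReal.tsum_mul_right, tsum_subtype_eq_of_support_subset (hsupp _)]
    _ = ∑' ν : D, ∫⁻ t, {ν | c < t * ν}.indicator m ν * w t := by
        refine lintegral_tsum fun ν ↦ ((Measurable.indicator measurable_const
          (measurableSet_lt measurable_const (by fun_prop))).mul hw).aemeasurable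
    _ ≤ ∑' ν : D, ENNReal.ofReal c⁻¹ * (m ν * ENNReal.ofReal |ν|) :=
        ENNReal.tsum_le_tsum fun ν ↦ hterm ν
    _ = ENNReal.ofReal c⁻¹ * ∑' ν, m ν * ENNReal.ofReal |ν| := by
        rw [ENNReal.tsum_mul_left, tsum_subtype_eq_of_support_subset subset_rfl]

section Main

open Real

variable {H : Type*} [NormedAddCommGroup H] [InnerProductSpace ℂ H] [CompleteSpace H]

theorem lintegral_eigCount_add_smul_mul_le {T₁ T₂ : H →L[ℂ] H} (h₁c : IsCompactOperator T₁)
    (h₁sa : IsSelfAdjoint T₁) (h₂c : IsCompactOperator T₂) (h₂sa : IsSelfAdjoint T₂)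
    (h₂tr : traceNormE T₂ ≠ ⊤) {s : ℝ} (hs : 0 < s) :
    ∫⁻ t : ℝ, eigCount (T₁ + (t : ℂ) • T₂) (Ioi s) * ENNReal.ofReal (1 + t ^ 2)⁻¹
      ≤ ENNReal.ofReal π * eigCount T₁ (Ioi (s / 2)) + ENNReal.ofReal (2 / s) * traceNormE T₂ := by
  have hw : Measurable fun t : ℝ ↦ ENNReal.ofReal (1 + t ^ 2)⁻¹ := by fun_prop
  set m : ℝ → ℝ≥0∞ := fun ν ↦ finrank ℂ (eigenspace (T₂ : End ℂ H) (ν : ℂ))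
  have hweyl (t : ℝ) : eigCount (T₁ + (t : ℂ) • T₂) (Ioi s)
      ≤ eigCount T₁ (Ioi (s / 2)) + ∑' ν, {ν | s / 2 < t * ν}.indicator m ν := by
    have htT₂ : (((t : ℂ) • T₂ : H →L[ℂ] H) : End ℂ H).IsSymmetric := by
      rw [ContinuousLinearMap.toLinearMap_smul]
      exact h₂sa.isSymmetric.smul (Complex.conj_ofReal t)
    have h := eigCount_add_Ioi_le h₁c h₁sa.isSymmetric (h₂c.smul (t : ℂ)) htT₂
      (half_pos hs).le (half_pos hs).le
    rw [add_halves, eigCount_ofReal_smul T₂ (notMem_Ioi.2 (half_pos hs).le),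
      eigCount_eq_tsum_indicator T₂] at h
    exact h
  calc ∫⁻ t : ℝ, eigCount (T₁ + (t : ℂ) • T₂) (Ioi s) * ENNReal.ofReal (1 + t ^ 2)⁻¹
      ≤ ∫⁻ t : ℝ, (eigCount T₁ (Ioi (s / 2)) + ∑' ν, {ν | s / 2 < t * ν}.indicator m ν)
          * ENNReal.ofReal (1 + t ^ 2)⁻¹ :=
        lintegral_mono fun t ↦ mul_le_mul_left (hweyl t) _
    _ = eigCount T₁ (Ioi (s / 2)) * ENNReal.ofReal π
          + ∫⁻ t : ℝ, (∑' ν, {ν | s / 2 < t * ν}.indicator m ν) * ENNReal.ofReal (1 + t ^ 2)⁻¹ := by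
        simp_rw [add_mul]
        rw [lintegral_add_left (hw.const_mul _), lintegral_const_mul _ hw, lintegral_inv_one_add_sq]
    _ ≤ eigCount T₁ (Ioi (s / 2)) * ENNReal.ofReal π + ENNReal.ofReal (s / 2)⁻¹ * traceNormE T₂ :=
        add_le_add_right (lintegral_tsum_indicator_mul_inv_one_add_sq_le m h₂tr (half_pos hs)) _
    _ = ENNReal.ofReal π * eigCount T₁ (Ioi (s / 2)) + ENNReal.ofReal (2 / s) * traceNormE T₂ := by
        rw [mul_comm, inv_div]

end Main

theorem integral_counting_le_general {H : Type*} [NormedAddCommGroup H] [InnerProductSpace ℂ H]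
    [CompleteSpace H]
    (T₁ T₂ : H →L[ℂ] H) (h₁c : IsCompactOperator T₁) (h₁sa : IsSelfAdjoint T₁)
    (h₂c : IsCompactOperator T₂) (h₂sa : IsSelfAdjoint T₂) (h₂tr : traceNormE T₂ ≠ ⊤)
    (s : ℝ) (hs : 0 < s) :
    (∫⁻ t : ℝ, eigCount (T₁ + (t : ℂ) • T₂) (Set.Ioi s) * ENNReal.ofReal ((1 + t ^ 2)⁻¹))
        ≤ ENNReal.ofReal Real.pi * eigCount T₁ (Set.Ioi (s / 2))
          + ENNReal.ofReal (2 / s) * traceNormE T₂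
    ∧ (∫⁻ t : ℝ, eigCount (-(T₁ + (t : ℂ) • T₂)) (Set.Ioi s) * ENNReal.ofReal ((1 + t ^ 2)⁻¹))
        ≤ ENNReal.ofReal Real.pi * eigCount (-T₁) (Set.Ioi (s / 2))
          + ENNReal.ofReal (2 / s) * traceNormE T₂ := by
  refine ⟨lintegral_eigCount_add_smul_mul_le h₁c h₁sa h₂c h₂sa h₂tr hs, ?_⟩
  have hneg := lintegral_eigCount_add_smul_mul_le h₁c.neg h₁sa.neg h₂c.neg h₂sa.neg
    ((traceNormE_neg T₂).symm ▸ h₂tr) hs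
  simpa only [smul_neg, ← neg_add, traceNormE_neg] using hneg

/-- Pushnitski's estimate: for compact self-adjoint `T₁` and self-adjoint trace-class `T₂`,
`(1/π)∫ n_±(s; T₁ + t T₂) dt/(1+t²) ≤ n_±(s/2; T₁) + (2/(πs))‖T₂‖₁`, i.e. multiplying by `π`,
`∫ n_±(s; T₁ + t T₂) dt/(1+t²) ≤ π n_±(s/2; T₁) + (2/s)‖T₂‖₁`. -/
theorem integral_counting_le {H : Type*} [NormedAddCommGroup H] [InnerProductSpace ℂ H]
    [CompleteSpace H] [TopologicalSpace.SeparableSpace H]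
    (T₁ T₂ : H →L[ℂ] H) (h₁c : IsCompactOperator T₁) (h₁sa : IsSelfAdjoint T₁)
    (h₂c : IsCompactOperator T₂) (h₂sa : IsSelfAdjoint T₂) (h₂tr : traceNormE T₂ ≠ ⊤)
    (s : ℝ) (hs : 0 < s) :
    (∫⁻ t : ℝ, eigCount (T₁ + (t : ℂ) • T₂) (Set.Ioi s) * ENNReal.ofReal ((1 + t ^ 2)⁻¹))
        ≤ ENNReal.ofReal Real.pi * eigCount T₁ (Set.Ioi (s / 2))
          + ENNReal.ofReal (2 / s) * traceNormE T₂
    ∧ (∫⁻ t : ℝ, eigCount (-(T₁ + (t : ℂ) • T₂)) (Set.Ioi s) * ENNReal.ofReal ((1 + t ^ 2)⁻¹))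
        ≤ ENNReal.ofReal Real.pi * eigCount (-T₁) (Set.Ioi (s / 2))
          + ENNReal.ofReal (2 / s) * traceNormE T₂ :=
  integral_counting_le_general T₁ T₂ h₁c h₁sa h₂c h₂sa h₂tr s hs
end

section
/- For real constants C and functions F_C(x) := x ln x − C x defined for x > 0, the inverse function F_C^{-1} satisfies the asymptotic expansion F_C^{-1}(y) = y/ln y + y·ln(ln y)/(ln y)² + C y/(ln y)² + o(y/(ln y)²) as y → ∞. -/
open Filter Asymptotics Real Topology

/-! Put `x = g y` and `w = log x - C`. Then `y = x w` and `log y = w + C + log w`, so the error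
of the expansion, measured in units of `y / log² y`, is exactly
`(log w + C)² / w - log (1 + (log w + C) / w)`. Both terms tend to `0` because `log w = o(w)`,
and `w → ∞` with `y`. -/

lemma tendsto_pow_log_add_const_div_atTop (C : ℝ) (n : ℕ) :
    Tendsto (fun w => (log w + C) ^ n / w) atTop (𝓝 0) :=
  ((isBigO_refl log atTop).add isLittleO_const_log_atTop.isBigO).pow n
    |>.trans_isLittleO isLittleO_pow_log_id_atTop |>.tendsto_div_nhds_zero

lemma tendsto_log_add_const_sq_div_sub_log_one_add (C : ℝ) :
    Tendsto (fun w => (log w + C) ^ 2 / w - log (1 + (log w + C) / w)) atTop (𝓝 0) := by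
  have hlog : Tendsto (fun w => log (1 + (log w + C) / w)) atTop (𝓝 0) := by
    have h1 : Tendsto (fun w => 1 + (log w + C) / w) atTop (𝓝 1) := by
      simpa using (tendsto_pow_log_add_const_div_atTop C 1).const_add 1
    simpa using h1.log one_ne_zero
  simpa using (tendsto_pow_log_add_const_div_atTop C 2).sub hlog

lemma sub_expansion_div_eq {C x y : ℝ} (hx : 0 < x) (hw : 0 < log x - C) (hy : 1 < y)
    (hxy : x * log x - C * x = y) :
    (x - (y / log y + y * log (log y) / log y ^ 2 + C * y / log y ^ 2)) / (y / log y ^ 2)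
      = (log (log x - C) + C) ^ 2 / (log x - C)
        - log (1 + (log (log x - C) + C) / (log x - C)) := by
  have hlogx : log x = (log x - C) + C := by ring
  generalize log x - C = w at hw hlogx hxy ⊢
  have hyx : y = x * w := by rw [← hxy, hlogx]; ring
  have hlogw : log w = log y - w - C := by rw [hyx, log_mul hx.ne' hw.ne', hlogx]; ring
  have hL : 0 < log y := log_pos hy
  have h1t : 1 + (log w + C) / w = log y / w := by rw [hlogw]; field_simp; ring
  rw [h1t, log_div hL.ne' hw.ne', hlogw, show x = y / w by rw [hyx]; field_simp]
  field_simp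
  ring

/-- Asymptotic expansion of the inverse of `F_C(x) = x ln x − C x`:
if `g` is an inverse of `F_C` near `+∞` (i.e. `g → ∞` and `F_C (g y) = y` eventually), then
`g(y) = y/ln y + y ln(ln y)/(ln y)² + C y/(ln y)² + o(y/(ln y)²)` as `y → ∞`. -/
theorem inverse_xlogx_asymptotics (C : ℝ) (g : ℝ → ℝ)
    (hg : Tendsto g atTop atTop)
    (hinv : ∀ᶠ y in atTop, g y * Real.log (g y) - C * g y = y) :
    (fun y => g y - (y / Real.log y + y * Real.log (Real.log y) / (Real.log y) ^ 2
        + C * y / (Real.log y) ^ 2))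
      =o[atTop] fun y => y / (Real.log y) ^ 2 := by
  have hw : Tendsto (fun y => log (g y) - C) atTop atTop :=
    tendsto_atTop_add_const_right _ (-C) (tendsto_log_atTop.comp hg)
  have hscale : ∀ᶠ y in atTop, 0 < y / log y ^ 2 := by
    filter_upwards [eventually_gt_atTop 1] with y hy
    exact div_pos (by linarith) (pow_pos (log_pos hy) 2)
  rw [isLittleO_iff_tendsto']
  · refine ((tendsto_log_add_const_sq_div_sub_log_one_add C).comp hw).congr' ?_
    filter_upwards [hinv, hg.eventually_gt_atTop 0, hw.eventually_gt_atTop 0,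
      eventually_gt_atTop 1] with y hxy hx hwy hy
    exact (sub_expansion_div_eq hx hwy hy hxy).symm
  · filter_upwards [hscale] with y hy h0
    exact absurd h0 hy.ne'
end

section
/- Define, for small λ > 0, ln₂(λ) := ln|ln λ| and Φ₁(λ;C) := (|ln λ|/ln₂(λ))(1 + ln(ln₂(λ))/ln₂(λ) + C/ln₂(λ)). Then for any constant C ∈ ℝ, Φ₁(λ|ln λ|; C) = Φ₁(λ; C) + O(1) and Φ₁(λ|ln λ|^{-1}; C) = Φ₁(λ; C) + O(1) as λ ↓ 0. -/
open Filter Asymptotics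
open scoped Topology

/-- Iterated logarithm `ln₂(x) = ln |ln x|`. -/
noncomputable def lnTwo (x : ℝ) : ℝ := Real.log |Real.log x|

/-- `Φ₀(x) = |ln x| / ln₂(x)`. -/
noncomputable def Phi0 (x : ℝ) : ℝ := |Real.log x| / lnTwo x

/-- `Φ₁(x;C) = Φ₀(x)(1 + ln(ln₂ x)/ln₂ x + C/ln₂ x)`. -/
noncomputable def Phi1 (x C : ℝ) : ℝ :=
  Phi0 x * (1 + Real.log (lnTwo x) / lnTwo x + C / lnTwo x)

/-- Auxiliary: `Φ₁` as a function of `L = |ln x|`. -/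
noncomputable def Gfun (C L : ℝ) : ℝ :=
  L / Real.log L * (1 + Real.log (Real.log L) / Real.log L + C / Real.log L)

lemma phi_eq {y : ℝ} (C : ℝ) (h : Real.log y < 0) : Phi1 y C = Gfun C (-Real.log y) := by
  unfold Phi1 Phi0 lnTwo Gfun
  rw [abs_of_neg h]

/-- Multiplicative log-difference bound: `|log a - log b| * c ≤ |a - b|` when `0 < c ≤ a, b`. -/
lemma abs_log_sub_log_mul_le {a b c : ℝ} (hc : 0 < c) (hca : c ≤ a) (hcb : c ≤ b) :
    |Real.log a - Real.log b| * c ≤ |a - b| := by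
  have ha : 0 < a := hc.trans_le hca
  have hb : 0 < b := hc.trans_le hcb
  have key : ∀ u v : ℝ, 0 < u → 0 < v → c ≤ u → u ≤ v →
      (Real.log v - Real.log u) * c ≤ v - u := by
    intro u v hu hv hcu huv
    have h1 : Real.log (v / u) ≤ v / u - 1 := Real.log_le_sub_one_of_pos (div_pos hv hu)
    rw [Real.log_div hv.ne' hu.ne'] at h1
    have h2 : v / u - 1 = (v - u) / u := by field_simp
    rw [h2] at h1
    have h3 : (v - u) / u * c ≤ (v - u) / c * c := by
      have : (v - u) / u ≤ (v - u) / c :=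
        div_le_div_of_nonneg_left (by linarith) hc hcu
      exact mul_le_mul_of_nonneg_right this hc.le
    have h4 : (v - u) / c * c = v - u := div_mul_cancel₀ _ hc.ne'
    nlinarith [mul_le_mul_of_nonneg_right h1 hc.le]
  rcases le_total a b with hab | hab
  · have := key a b ha hb hca hab
    rw [abs_of_nonpos (by have := Real.log_le_log ha hab; linarith),
        abs_of_nonpos (by linarith)]
    linarith
  · have := key b a hb ha hcb hab
    rw [abs_of_nonneg (by have := Real.log_le_log hb hab; linarith),
        abs_of_nonneg (by linarith)]
    linarith

set_option maxHeartbeats 1600000 in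
/-- Key analytic lemma: shifting the argument of `Gfun` by at most `log L` changes it by `O(1)`. -/
lemma key_bound (C L L' : ℝ) (hL : Real.exp 16 ≤ L) (hd : |L' - L| ≤ Real.log L) :
    |Gfun C L' - Gfun C L| ≤ 100 * (1 + |C|) := by
  have hL16 : (16 : ℝ) ≤ L := by
    have : (16:ℝ) + 1 ≤ Real.exp 16 := Real.add_one_le_exp 16
    linarith
  have hL0 : (0:ℝ) < L := by linarith
  set l := Real.log L with hl_def
  have hl16 : (16 : ℝ) ≤ l := by
    have := Real.log_le_log (Real.exp_pos 16) hL
    rwa [Real.log_exp] at this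
  have hl0 : (0:ℝ) < l := by linarith
  -- l ≤ L / 2
  have hlL : l ≤ L / 2 := by
    set s := Real.sqrt L with hs_def
    have hs2 : s ^ 2 = L := Real.sq_sqrt hL0.le
    have hs4 : (4:ℝ) ≤ s := by
      nlinarith [Real.sqrt_nonneg L]
    have hlogs : Real.log s ≤ s - 1 := Real.log_le_sub_one_of_pos (by linarith)
    have hls : l = 2 * Real.log s := by
      rw [hl_def, ← hs2, Real.log_pow]; push_cast; ring
    nlinarith
  -- bounds on L'
  have hL'lb : L / 2 ≤ L' := by
    have := abs_le.mp hd
    linarith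
  have hL'ub : L' ≤ 2 * L := by
    have := abs_le.mp hd
    linarith
  have hL'0 : (0:ℝ) < L' := by linarith
  set l' := Real.log L' with hl'_def
  -- bounds on l'
  have hl'lb : l - 1 ≤ l' := by
    have h1 : Real.log (L / 2) ≤ l' := Real.log_le_log (by linarith) hL'lb
    have h2 : Real.log (L / 2) = l - Real.log 2 := by
      rw [hl_def, Real.log_div hL0.ne' (by norm_num)]
    have h3 : Real.log 2 ≤ 1 := by
      have := Real.log_le_sub_one_of_pos (by norm_num : (0:ℝ) < 2)
      linarith
    linarith
  have hl'ub : l' ≤ l + 1 := by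
    have h1 : l' ≤ Real.log (2 * L) := Real.log_le_log hL'0 hL'ub
    have h2 : Real.log (2 * L) = Real.log 2 + l := by
      rw [hl_def, Real.log_mul (by norm_num) hL0.ne']
    have h3 : Real.log 2 ≤ 1 := by
      have := Real.log_le_sub_one_of_pos (by norm_num : (0:ℝ) < 2)
      linarith
    linarith
  have hl'2 : l / 2 ≤ l' := by linarith
  have hl'0 : (0:ℝ) < l' := by linarith
  have hl'l : l' ≤ 2 * l := by linarith
  -- |l' - l| * L ≤ 2 * l
  have h7 : |l' - l| * (L / 2) ≤ |L' - L| :=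
    abs_log_sub_log_mul_le (by linarith) hL'lb (by linarith)
  have h7m : |l' - l| * L ≤ 2 * l := by
    nlinarith [abs_nonneg (l' - l)]
  -- |log l' - log l| * L ≤ 4
  have h8 : |Real.log l' - Real.log l| * (l / 2) ≤ |l' - l| :=
    abs_log_sub_log_mul_le (by linarith) hl'2 (by linarith)
  have h8m : |Real.log l' - Real.log l| * L ≤ 4 := by
    nlinarith [abs_nonneg (Real.log l' - Real.log l), abs_nonneg (l' - l)]
  -- log l ≤ l, log l' ≤ l', and both positive
  have hlogl_pos : 0 < Real.log l := Real.log_pos (by linarith)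
  have hlogl_le : Real.log l ≤ l := by
    have := Real.log_le_sub_one_of_pos hl0; linarith
  -- the decomposition identity
  have hid : Gfun C L' - Gfun C L =
      (L' - L) / l' + L * (l - l') / (l * l')
      + (Real.log l' - Real.log l) * L' / l' ^ 2
      + Real.log l * (L' - L) / l' ^ 2
      + Real.log l * (L * (l - l') * (l + l')) / (l ^ 2 * l' ^ 2)
      + C * (L' - L) / l' ^ 2
      + C * (L * (l - l') * (l + l')) / (l ^ 2 * l' ^ 2) := by
    unfold Gfun
    rw [← hl_def, ← hl'_def]
    field_simp
    ring
  rw [hid]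
  -- per-term bounds
  have habs_sub : |l - l'| = |l' - l| := abs_sub_comm l l'
  have t1 : |(L' - L) / l'| ≤ 2 := by
    rw [abs_div, abs_of_pos hl'0, div_le_iff₀ hl'0]
    linarith
  have t2 : |L * (l - l') / (l * l')| ≤ 2 := by
    rw [abs_div, abs_of_pos (by positivity : (0:ℝ) < l * l'), div_le_iff₀ (by positivity),
      abs_mul, abs_of_pos hL0, habs_sub]
    nlinarith [abs_nonneg (l' - l)]
  have t3 : |(Real.log l' - Real.log l) * L' / l' ^ 2| ≤ 8 := by
    rw [abs_div, abs_of_pos (by positivity : (0:ℝ) < l' ^ 2), div_le_iff₀ (by positivity),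
      abs_mul, abs_of_pos hL'0]
    nlinarith [abs_nonneg (Real.log l' - Real.log l),
      mul_le_mul_of_nonneg_left hL'ub (abs_nonneg (Real.log l' - Real.log l)),
      sq_nonneg (l' - 1)]
  have t4 : |Real.log l * (L' - L) / l' ^ 2| ≤ 4 := by
    rw [abs_div, abs_of_pos (by positivity : (0:ℝ) < l' ^ 2), div_le_iff₀ (by positivity),
      abs_mul, abs_of_pos hlogl_pos]
    nlinarith [abs_nonneg (L' - L)]
  have t5 : |Real.log l * (L * (l - l') * (l + l')) / (l ^ 2 * l' ^ 2)| ≤ 2 := by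
    rw [abs_div, abs_of_pos (by positivity : (0:ℝ) < l ^ 2 * l' ^ 2), div_le_iff₀ (by positivity),
      abs_mul, abs_of_pos hlogl_pos, abs_mul, abs_mul, abs_of_pos hL0, habs_sub,
      abs_of_pos (by linarith : (0:ℝ) < l + l')]
    have hd0 : (0:ℝ) ≤ |l' - l| := abs_nonneg _
    have hLd : L * |l' - l| ≤ 2 * l := by linarith [h7m, mul_comm L (|l' - l|)]
    have h2 : L * |l' - l| * (l + l') ≤ 2 * l * (3 * l) :=
      mul_le_mul hLd (by linarith) (by linarith) (by linarith)
    have hl'sq : 3 * l ≤ l' ^ 2 := by nlinarith [sq_nonneg (l' - l / 2)]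
    have h3 : Real.log l * (L * |l' - l| * (l + l')) ≤ l * (6 * l ^ 2) := by
      apply mul_le_mul hlogl_le (by nlinarith) (by positivity) (by linarith)
    nlinarith [mul_le_mul_of_nonneg_left hl'sq (by positivity : (0:ℝ) ≤ 2 * l ^ 2)]
  have t6 : |C * (L' - L) / l' ^ 2| ≤ |C| := by
    rw [abs_div, abs_of_pos (by positivity : (0:ℝ) < l' ^ 2), div_le_iff₀ (by positivity),
      abs_mul]
    have h1 : |L' - L| ≤ l' ^ 2 := by nlinarith [sq_nonneg (l' - 2)]
    exact mul_le_mul_of_nonneg_left h1 (abs_nonneg C)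
  have t7 : |C * (L * (l - l') * (l + l')) / (l ^ 2 * l' ^ 2)| ≤ |C| := by
    rw [abs_div, abs_of_pos (by positivity : (0:ℝ) < l ^ 2 * l' ^ 2), div_le_iff₀ (by positivity),
      abs_mul, abs_mul, abs_mul, abs_of_pos hL0, habs_sub,
      abs_of_pos (by linarith : (0:ℝ) < l + l')]
    have hd0 : (0:ℝ) ≤ |l' - l| := abs_nonneg _
    have hLd : L * |l' - l| ≤ 2 * l := by linarith [h7m, mul_comm L (|l' - l|)]
    have h2 : L * |l' - l| * (l + l') ≤ 2 * l * (3 * l) :=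
      mul_le_mul hLd (by linarith) (by linarith) (by linarith)
    have h1 : L * |l' - l| * (l + l') ≤ l ^ 2 * l' ^ 2 := by
      nlinarith [sq_nonneg (l' - 3)]
    exact mul_le_mul_of_nonneg_left h1 (abs_nonneg C)
  set a1 := (L' - L) / l'
  set a2 := L * (l - l') / (l * l')
  set a3 := (Real.log l' - Real.log l) * L' / l' ^ 2
  set a4 := Real.log l * (L' - L) / l' ^ 2
  set a5 := Real.log l * (L * (l - l') * (l + l')) / (l ^ 2 * l' ^ 2)
  set a6 := C * (L' - L) / l' ^ 2
  set a7 := C * (L * (l - l') * (l + l')) / (l ^ 2 * l' ^ 2)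
  have habs : |a1 + a2 + a3 + a4 + a5 + a6 + a7|
      ≤ |a1| + |a2| + |a3| + |a4| + |a5| + |a6| + |a7| := by
    calc |a1 + a2 + a3 + a4 + a5 + a6 + a7|
        ≤ |a1 + a2 + a3 + a4 + a5 + a6| + |a7| := abs_add_le _ _
      _ ≤ |a1 + a2 + a3 + a4 + a5| + |a6| + |a7| := by linarith [abs_add_le (a1+a2+a3+a4+a5) a6]
      _ ≤ |a1 + a2 + a3 + a4| + |a5| + |a6| + |a7| := by linarith [abs_add_le (a1+a2+a3+a4) a5]
      _ ≤ |a1 + a2 + a3| + |a4| + |a5| + |a6| + |a7| := by linarith [abs_add_le (a1+a2+a3) a4]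
      _ ≤ |a1 + a2| + |a3| + |a4| + |a5| + |a6| + |a7| := by linarith [abs_add_le (a1+a2) a3]
      _ ≤ |a1| + |a2| + |a3| + |a4| + |a5| + |a6| + |a7| := by linarith [abs_add_le a1 a2]
  have hC : (0:ℝ) ≤ |C| := abs_nonneg C
  linarith

/-- `Φ₁(λ|ln λ|;C) = Φ₁(λ;C) + O(1)` and `Φ₁(λ|ln λ|⁻¹;C) = Φ₁(λ;C) + O(1)` as `λ ↓ 0`. -/
theorem Phi1_log_scale (C : ℝ) :
    ((fun x : ℝ => Phi1 (x * |Real.log x|) C - Phi1 x C)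
        =O[𝓝[>] (0 : ℝ)] fun _ => (1 : ℝ))
    ∧ ((fun x : ℝ => Phi1 (x * |Real.log x|⁻¹) C - Phi1 x C)
        =O[𝓝[>] (0 : ℝ)] fun _ => (1 : ℝ)) := by
  have hlog : Tendsto Real.log (𝓝[>] (0:ℝ)) atBot := Real.tendsto_log_nhdsGT_zero
  have hev : ∀ᶠ x in 𝓝[>] (0:ℝ), Real.log x ≤ -Real.exp 16 :=
    hlog.eventually (eventually_le_atBot _)
  have hev0 : ∀ᶠ x in 𝓝[>] (0:ℝ), (0:ℝ) < x := eventually_mem_nhdsWithin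
  have main : ∀ x : ℝ, 0 < x → Real.log x ≤ -Real.exp 16 →
      |Phi1 (x * |Real.log x|) C - Phi1 x C| ≤ 100 * (1 + |C|) ∧
      |Phi1 (x * |Real.log x|⁻¹) C - Phi1 x C| ≤ 100 * (1 + |C|) := by
    intro x hx0 hx
    have hexp : (0:ℝ) < Real.exp 16 := Real.exp_pos 16
    have hlx_neg : Real.log x < 0 := by linarith
    set L := -Real.log x with hL_def
    have hL : Real.exp 16 ≤ L := by rw [hL_def]; linarith
    have hL16 : (16:ℝ) ≤ L := by
      have : (16:ℝ) + 1 ≤ Real.exp 16 := Real.add_one_le_exp 16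
      linarith
    have hL0 : (0:ℝ) < L := by linarith
    set l := Real.log L with hl_def
    have hl0 : (0:ℝ) ≤ l := by
      rw [hl_def]
      exact Real.log_nonneg (by linarith)
    have hlL : l < L := by
      have := Real.log_le_sub_one_of_pos hL0
      rw [← hl_def] at this
      linarith
    have habsx : |Real.log x| = L := by rw [abs_of_neg hlx_neg]
    have hphix : Phi1 x C = Gfun C L := phi_eq C hlx_neg
    constructor
    · -- λ |ln λ|
      have hlog1 : Real.log (x * |Real.log x|) = -(L - l) := by
        rw [habsx, Real.log_mul hx0.ne' hL0.ne', ← hl_def]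
        rw [hL_def]; ring
      have hneg1 : Real.log (x * |Real.log x|) < 0 := by rw [hlog1]; linarith
      have : Phi1 (x * |Real.log x|) C = Gfun C (L - l) := by
        rw [phi_eq C hneg1, hlog1, neg_neg]
      rw [this, hphix]
      refine key_bound C L (L - l) hL ?_
      rw [← hl_def]
      have h1 : L - l - L = -l := by ring
      rw [h1, abs_neg, abs_of_nonneg hl0]
    · -- λ |ln λ|⁻¹
      have hlog2 : Real.log (x * |Real.log x|⁻¹) = -(L + l) := by
        rw [habsx, Real.log_mul hx0.ne' (inv_ne_zero hL0.ne'), Real.log_inv, ← hl_def]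
        rw [hL_def]; ring
      have hneg2 : Real.log (x * |Real.log x|⁻¹) < 0 := by rw [hlog2]; linarith
      have : Phi1 (x * |Real.log x|⁻¹) C = Gfun C (L + l) := by
        rw [phi_eq C hneg2, hlog2, neg_neg]
      rw [this, hphix]
      refine key_bound C L (L + l) hL ?_
      rw [← hl_def]
      have h1 : L + l - L = l := by ring
      rw [h1, abs_of_nonneg hl0]
  constructor
  · rw [isBigO_iff]
    refine ⟨100 * (1 + |C|), ?_⟩
    filter_upwards [hev, hev0] with x hx hx0
    simpa [Real.norm_eq_abs] using (main x hx0 hx).1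
  · rw [isBigO_iff]
    refine ⟨100 * (1 + |C|), ?_⟩
    filter_upwards [hev, hev0] with x hx hx0
    simpa [Real.norm_eq_abs] using (main x hx0 hx).2
end

section
/- Let (ν_k)_{k∈ℤ₊} be a non-increasing sequence of positive reals satisfying ln ν_k = −k ln k + Ak + o(k) as k → ∞, for some constant A ∈ ℝ. Then the counting function N(λ) := #{k ∈ ℤ₊ : ν_k > λ} satisfies N(λ) = Φ₁(λ; A) + o(|ln λ|/ln₂(λ)²) as λ ↓ 0, where ln₂(λ) := ln|ln λ| and Φ₁(λ;A) := (|ln λ|/ln₂(λ))(1 + ln(ln₂(λ))/ln₂(λ) + A/ln₂(λ)). -/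
open Filter Asymptotics
open scoped Topology

/-!
With `L = |ln λ|` and `g(y) = y ln y - A y` the hypothesis reads `ln ν_k = -g(k) + o(k)`, so
`N(λ)` is essentially the root of `g(y) = L`. The explicit function
`m_c(L) = (L / ln L) (1 + (ln ln L + A + c) / ln L)` inverts `g` to second order:
`g(m_c(L)) = L + (c + o(1)) L / ln L`. For `c = ±ε` this gap dominates the error
`o(m_c(L)) = o(L / ln L)`, so monotonicity of `ν` and of `g` gives `⌊m_{-ε}⌋ < N(λ) ≤ ⌈m_ε⌉`.
Finally `m_{±ε} = m_0 ± ε L / (ln L)²` and `m_0(|ln λ|) = Φ₁(λ; A)`.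
-/

open Real Set

lemma tendsto_div_log_pow_atTop (n : ℕ) : Tendsto (fun L : ℝ => L / log L ^ n) atTop atTop := by
  have h : Tendsto (fun L : ℝ => log L ^ n / L) atTop (𝓝[>] 0) := by
    refine tendsto_nhdsWithin_iff.2
      ⟨by simpa using tendsto_pow_log_div_mul_add_atTop 1 0 n one_ne_zero, ?_⟩
    filter_upwards [eventually_gt_atTop 1] with L hL
    exact div_pos (pow_pos (log_pos hL) n) (by linarith)
  exact h.inv_tendsto_nhdsGT_zero.congr fun L => inv_div _ _

lemma tendsto_div_log_atTop : Tendsto (fun L : ℝ => L / log L) atTop atTop := by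
  simpa using tendsto_div_log_pow_atTop 1

lemma isBigO_log_add_const (B : ℝ) : (fun t : ℝ => log t + B) =O[atTop] log :=
  (isBigO_refl _ _).add isLittleO_const_log_atTop.isBigO

lemma tendsto_log_add_div_self (B : ℝ) : Tendsto (fun t : ℝ => (log t + B) / t) atTop (𝓝 0) :=
  ((isBigO_log_add_const B).trans_isLittleO isLittleO_log_id_atTop).tendsto_div_nhds_zero

lemma tendsto_log_add_mul_log_add_div_self (B B' : ℝ) :
    Tendsto (fun t : ℝ => (log t + B) * (log t + B') / t) atTop (𝓝 0) :=
  ((isBigO_log_add_const B).mul (isBigO_log_add_const B')).trans_isLittleO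
    (isLittleO_pow_log_id_atTop.congr_left fun t => sq (log t)) |>.tendsto_div_nhds_zero

-- `logDecay A` is the `g` above, and `logDecayInv A c` is `m_c`.
noncomputable def logDecay (A y : ℝ) : ℝ := y * log y - A * y

noncomputable def logDecayInv (A c L : ℝ) : ℝ :=
  L / log L * (1 + (log (log L) + A + c) / log L)

lemma logDecay_strictMonoOn (A : ℝ) : StrictMonoOn (logDecay A) (Ici (exp (A - 1))) := by
  have hpos : ∀ y ∈ Ici (exp (A - 1)), 0 < y := fun y hy => (exp_pos _).trans_le hy
  refine strictMonoOn_of_deriv_pos (convex_Ici _) ?_ fun y hy => ?_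
  · exact (continuousOn_id.mul (continuousOn_log.mono fun y hy => (hpos y hy).ne')).sub
      (continuousOn_const.mul continuousOn_id)
  · rw [interior_Ici] at hy
    have hy0 : 0 < y := (exp_pos _).trans hy
    have hd : HasDerivAt (logDecay A) (log y + 1 - A * 1) y :=
      (hasDerivAt_mul_log hy0.ne').sub ((hasDerivAt_id y).const_mul A)
    rw [hd.deriv]
    linarith [(lt_log_iff_exp_lt hy0).2 hy]

lemma logDecayInv_eq_add (A c L : ℝ) :
    logDecayInv A c L = logDecayInv A 0 L + c * (L / log L ^ 2) := by
  unfold logDecayInv; ring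

lemma tendsto_logDecayInv_div (A c : ℝ) :
    Tendsto (fun L => logDecayInv A c L / (L / log L)) atTop (𝓝 1) := by
  have h := ((tendsto_log_add_div_self (A + c)).comp tendsto_log_atTop).const_add 1
  rw [add_zero] at h
  refine h.congr' ?_
  filter_upwards [eventually_gt_atTop 1] with L hL
  have hlog : log L ≠ 0 := (log_pos hL).ne'
  have hL0 : L ≠ 0 := by positivity
  simp only [Function.comp, logDecayInv, add_assoc]
  field_simp

lemma tendsto_logDecayInv_atTop (A c : ℝ) : Tendsto (logDecayInv A c) atTop atTop := by
  refine ((tendsto_logDecayInv_div A c).pos_mul_atTop one_pos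
    tendsto_div_log_atTop).congr' ?_
  filter_upwards [eventually_gt_atTop 1] with L hL
  exact div_mul_cancel₀ _ (div_pos (by linarith) (log_pos hL)).ne'

lemma logDecay_logDecayInv_sub_div (A c L : ℝ) (hL : 1 < L)
    (hw : 0 < 1 + (log (log L) + A + c) / log L) :
    (logDecay A (logDecayInv A c L) - L) / (L / log L) =
      c + log (1 + (log (log L) + A + c) / log L)
        + (log (log L) + A + c) / log L * log (1 + (log (log L) + A + c) / log L)
        - (log (log L) + A + c) * (log (log L) + A) / log L := by
  have ht : 0 < log L := log_pos hL
  have hL0 : 0 < L := by linarith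
  have hlog : log (logDecayInv A c L) =
      log L - log (log L) + log (1 + (log (log L) + A + c) / log L) := by
    rw [logDecayInv, log_mul (by positivity) hw.ne', log_div hL0.ne' ht.ne']
  rw [logDecay, hlog, logDecayInv]
  field_simp
  ring

lemma tendsto_logDecay_logDecayInv_sub_div (A c : ℝ) :
    Tendsto (fun L => (logDecay A (logDecayInv A c L) - L) / (L / log L)) atTop (𝓝 c) := by
  have hw : Tendsto (fun t : ℝ => (log t + A + c) / t) atTop (𝓝 0) := by
    simpa only [add_assoc] using tendsto_log_add_div_self (A + c)
  have hlog1 : Tendsto (fun t : ℝ => log (1 + (log t + A + c) / t)) atTop (𝓝 0) := by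
    have h1 : Tendsto (fun t : ℝ => 1 + (log t + A + c) / t) atTop (𝓝 1) := by
      simpa using hw.const_add 1
    simpa [Function.comp_def] using (continuousAt_log one_ne_zero).tendsto.comp h1
  have h := (((hlog1.const_add c).add (hw.mul hlog1)).sub
    (tendsto_log_add_mul_log_add_div_self (A + c) A)).comp tendsto_log_atTop
  simp only [add_zero, mul_zero, sub_zero] at h
  refine h.congr' ?_
  filter_upwards [eventually_gt_atTop 1,
    (hw.comp tendsto_log_atTop).eventually (eventually_gt_nhds (neg_lt_zero.2 one_pos))]
    with L hL hwL
  rw [logDecay_logDecayInv_sub_div A c L hL (by rw [Function.comp_apply] at hwL; linarith)]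
  simp only [Function.comp, add_assoc]

section Counting

variable {ν : ℕ → ℝ}

lemma setOf_lt_subset_Iio (hν : Antitone ν) {x : ℝ} {n : ℕ} (hn : ν n ≤ x) :
    {k | x < ν k} ⊆ Iio n := fun _ hk =>
  lt_of_not_ge fun hnk => ((hν hnk).trans hn).not_gt hk

lemma ncard_lt_le_of_le (hν : Antitone ν) {x : ℝ} {n : ℕ} (hn : ν n ≤ x) :
    {k | x < ν k}.ncard ≤ n :=
  ncard_Iio_nat n ▸ ncard_le_ncard (setOf_lt_subset_Iio hν hn) (finite_Iio n)

lemma lt_ncard_of_lt (hν : Antitone ν) {x : ℝ} {m n : ℕ} (hn : ν n ≤ x) (hm : x < ν m) :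
    m < {k | x < ν k}.ncard :=
  Nat.lt_iff_add_one_le.2 <| ncard_Iic_nat m ▸
    ncard_le_ncard (fun _ hk => hm.trans_le (hν hk))
      ((finite_Iio n).subset (setOf_lt_subset_Iio hν hn))

variable {A : ℝ}

lemma eventually_abs_log_add_logDecay_le
    (hasym : (fun k : ℕ => log (ν k) - (-(k * log k) + A * k)) =o[atTop] fun k : ℕ => (k : ℝ))
    {f : ℝ → ℕ} (hf : Tendsto f atTop atTop) {δ : ℝ} (hδ : 0 < δ) :
    ∀ᶠ L in atTop, |log (ν (f L)) + logDecay A (f L)| ≤ δ * f L := by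
  filter_upwards [(hasym.comp_tendsto hf).def hδ] with L hL
  have heq : log (ν (f L)) + logDecay A (f L) =
      log (ν (f L)) - (-(f L * log (f L)) + A * f L) := by
    unfold logDecay; ring
  rw [heq]
  simpa only [Function.comp, Real.norm_eq_abs, Nat.abs_cast] using hL

lemma eventually_nu_ceil_logDecayInv_le (hpos : ∀ k, 0 < ν k)
    (hasym : (fun k : ℕ => log (ν k) - (-(k * log k) + A * k)) =o[atTop] fun k : ℕ => (k : ℝ))
    {ε : ℝ} (hε : 0 < ε) :
    ∀ᶠ L in atTop, ν ⌈logDecayInv A ε L⌉₊ ≤ exp (-L) := by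
  have hm := tendsto_logDecayInv_atTop A ε
  have hk : Tendsto (fun L => ⌈logDecayInv A ε L⌉₊) atTop atTop := tendsto_nat_ceil_atTop.comp hm
  filter_upwards [eventually_abs_log_add_logDecay_le hasym hk (by positivity : 0 < ε / 6),
    (tendsto_logDecay_logDecayInv_sub_div A ε).eventually_const_le (half_lt_self hε),
    (tendsto_logDecayInv_div A ε).eventually_le_const one_lt_two,
    (tendsto_div_log_atTop).eventually_ge_atTop 1,
    hm.eventually_ge_atTop (exp (A - 1)), eventually_gt_atTop 1]
    with L herr hgap hm2 hX hmA hL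
  set m := logDecayInv A ε L
  set k := ⌈m⌉₊
  have hX0 : 0 < L / log L := div_pos (by linarith) (log_pos hL)
  have hgap' : L + ε / 2 * (L / log L) ≤ logDecay A m := by
    have := (le_div_iff₀ hX0).1 hgap; linarith
  have hkm : m ≤ k := Nat.le_ceil m
  have hk3 : (k : ℝ) ≤ 3 * (L / log L) := by
    have := (div_le_iff₀ hX0).1 hm2
    linarith [Nat.ceil_lt_add_one ((exp_pos _).le.trans hmA)]
  have hgk : logDecay A m ≤ logDecay A k :=
    (logDecay_strictMonoOn A).monotoneOn hmA (hmA.trans hkm) hkm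
  rw [← log_le_iff_le_exp (hpos _)]
  -- the error `(ε / 6) k ≤ (ε / 2) L / ln L` is absorbed by the gap `g(k) - L`
  linarith [(abs_le.1 herr).2, mul_le_mul_of_nonneg_left hk3 (by positivity : 0 ≤ ε / 6)]

lemma eventually_exp_neg_lt_nu_floor_logDecayInv (hpos : ∀ k, 0 < ν k)
    (hasym : (fun k : ℕ => log (ν k) - (-(k * log k) + A * k)) =o[atTop] fun k : ℕ => (k : ℝ))
    {ε : ℝ} (hε : 0 < ε) :
    ∀ᶠ L in atTop, exp (-L) < ν ⌊logDecayInv A (-ε) L⌋₊ := by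
  have hm := tendsto_logDecayInv_atTop A (-ε)
  have hk : Tendsto (fun L => ⌊logDecayInv A (-ε) L⌋₊) atTop atTop :=
    tendsto_nat_floor_atTop.comp hm
  filter_upwards [eventually_abs_log_add_logDecay_le hasym hk (by positivity : 0 < ε / 6),
    (tendsto_logDecay_logDecayInv_sub_div A (-ε)).eventually_le_const
      (by linarith : -ε < -(ε / 2)),
    (tendsto_logDecayInv_div A (-ε)).eventually_le_const one_lt_two,
    hm.eventually_ge_atTop (exp (A - 1) + 1), eventually_gt_atTop 1]
    with L herr hgap hm2 hmA hL
  set m := logDecayInv A (-ε) L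
  set k := ⌊m⌋₊
  have hX0 : 0 < L / log L := div_pos (by linarith) (log_pos hL)
  have hgap' : logDecay A m ≤ L - ε / 2 * (L / log L) := by
    have := (div_le_iff₀ hX0).1 hgap; linarith
  have hkm : (k : ℝ) ≤ m := Nat.floor_le ((exp_pos _).le.trans (by linarith))
  have hkA : exp (A - 1) ≤ k := by linarith [Nat.sub_one_lt_floor m]
  have hk2 : (k : ℝ) ≤ 2 * (L / log L) := hkm.trans ((div_le_iff₀ hX0).1 hm2)
  have hgk : logDecay A k ≤ logDecay A m :=
    (logDecay_strictMonoOn A).monotoneOn hkA (hkA.trans hkm) hkm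
  rw [← lt_log_iff_exp_lt (hpos _)]
  linarith [(abs_le.1 herr).1, mul_le_mul_of_nonneg_left hk2 (by positivity : 0 ≤ ε / 6),
    mul_pos hε hX0]

theorem isLittleO_ncard_exp_neg_sub_logDecayInv (hpos : ∀ k, 0 < ν k) (hmono : Antitone ν)
    (hasym : (fun k : ℕ => log (ν k) - (-(k * log k) + A * k)) =o[atTop] fun k : ℕ => (k : ℝ)) :
    (fun L : ℝ => ({k | exp (-L) < ν k}.ncard : ℝ) - logDecayInv A 0 L)
      =o[atTop] fun L => L / log L ^ 2 := by
  refine isLittleO_iff.2 fun ε hε => ?_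
  filter_upwards [eventually_nu_ceil_logDecayInv_le hpos hasym (half_pos hε),
    eventually_exp_neg_lt_nu_floor_logDecayInv hpos hasym (half_pos hε),
    (tendsto_logDecayInv_atTop A (ε / 2)).eventually_ge_atTop 0,
    (tendsto_div_log_pow_atTop 2).eventually_ge_atTop (2 / ε)]
    with L hup hlo hm0 hY
  have hY0 : 0 < L / log L ^ 2 := (div_pos two_pos hε).trans_le hY
  have hY1 : 1 ≤ ε / 2 * (L / log L ^ 2) := by
    rw [div_le_iff₀' hε] at hY; linarith
  have hN_le : ({k | exp (-L) < ν k}.ncard : ℝ) ≤ ⌈logDecayInv A (ε / 2) L⌉₊ := by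
    exact_mod_cast ncard_lt_le_of_le hmono hup
  have hN_gt : (⌊logDecayInv A (-(ε / 2)) L⌋₊ : ℝ) < {k | exp (-L) < ν k}.ncard := by
    exact_mod_cast lt_ncard_of_lt hmono hup hlo
  have hceil := Nat.ceil_lt_add_one hm0
  have hfloor := Nat.sub_one_lt_floor (logDecayInv A (-(ε / 2)) L)
  rw [logDecayInv_eq_add A (ε / 2)] at hceil hN_le
  rw [logDecayInv_eq_add A (-(ε / 2))] at hfloor hN_gt
  rw [Real.norm_eq_abs, Real.norm_eq_abs, abs_of_pos hY0, abs_le]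
  constructor <;> linarith

end Counting

lemma Phi1_eq_logDecayInv {x : ℝ} (hx : x ∈ Ioo 0 1) (A : ℝ) :
    Phi1 x A = logDecayInv A 0 (-log x) := by
  simp only [Phi1, Phi0, lnTwo, abs_of_neg (log_neg hx.1 hx.2), logDecayInv]
  ring

/-- If `ln ν_k = −k ln k + A k + o(k)` for a non-increasing positive sequence `ν`, then the
counting function `N(λ) = #{k : ν_k > λ}` satisfies
`N(λ) = Φ₁(λ;A) + o(|ln λ|/ln₂(λ)²)` as `λ ↓ 0`. -/
theorem counting_of_eigenvalue_asymptotics (A : ℝ) (ν : ℕ → ℝ)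
    (hpos : ∀ k, 0 < ν k) (hmono : Antitone ν)
    (hasym : (fun k : ℕ => Real.log (ν k) - (-(k * Real.log k) + A * k))
      =o[atTop] fun k : ℕ => (k : ℝ)) :
    (fun x : ℝ => (Set.ncard {k : ℕ | x < ν k} : ℝ) - Phi1 x A)
      =o[𝓝[>] (0 : ℝ)] fun x => |Real.log x| / (lnTwo x) ^ 2 := by
  have hL : Tendsto (fun x : ℝ => -log x) (𝓝[>] 0) atTop :=
    tendsto_neg_atBot_atTop.comp tendsto_log_nhdsGT_zero
  refine ((isLittleO_ncard_exp_neg_sub_logDecayInv hpos hmono hasym).comp_tendsto hL).congr'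
    ?_ ?_ <;> filter_upwards [Ioo_mem_nhdsGT one_pos] with x hx
  · simp only [Function.comp, neg_neg, exp_log hx.1, Phi1_eq_logDecayInv hx]
  · simp only [Function.comp, lnTwo, abs_of_neg (log_neg hx.1 hx.2)]
end
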